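/- Consider gradient descent iterates w^{(l+1)} = w^{(l)} - α_l ∇L(w^{(l)}) on the quadratic objective L(w) = (1/2) Σ_{i=1}^n (⟨w, x_i⟩ - y_i)^2, starting from initialization w^{(0)}. If {α'_0, ..., α'_{L-1}} is any permutation of the learning rates {α_0, ..., α_{L-1}}, then the iterate after L steps with the permuted learning rates, started from the same initialization w^{(0)}, equals the iterate after L steps with the original learning rates. -/
import Mathlib


/-- One step of gradient descent on `L(w) = (1/2) ∑ i, (⟨w, x i⟩ - y i)^2`
with learning rate `a`. -/
def gdStep {n d : ℕ} (x : Fin n → Fin d → ℝ) (y : Fin n → ℝ) (a : ℝ)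
    (w : Fin d → ℝ) : Fin d → ℝ :=
  w - a • ∑ i, ((∑ j, w j * x i j) - y i) • x i

/-- Two gradient descent steps with learning rates `a` and `b` commute. -/
lemma gdStep_comm {n d : ℕ} (x : Fin n → Fin d → ℝ) (y : Fin n → ℝ) (a b : ℝ)
    (w : Fin d → ℝ) : gdStep x y a (gdStep x y b w) = gdStep x y b (gdStep x y a w) := by
  funext k
  simp only [gdStep, Pi.sub_apply, Pi.smul_apply, Finset.sum_apply, smul_eq_mul,
    sub_mul, Finset.mul_sum, Finset.sum_mul, Finset.sum_sub_distrib, mul_sub]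
  ring_nf

/-- Permuting the learning rates of a sequence of gradient descent steps on the quadratic
objective, starting from the same initialization, yields the same final iterate. -/
theorem stmt5 {n d : ℕ} (x : Fin n → Fin d → ℝ) (y : Fin n → ℝ) (w0 : Fin d → ℝ)
    (αs αs' : List ℝ) (hperm : αs.Perm αs') :
    αs.foldl (fun w a => gdStep x y a w) w0 = αs'.foldl (fun w a => gdStep x y a w) w0 := by
  induction hperm generalizing w0 with
  | nil => rfl
  | cons _ _ ih => simp [ih]
  | swap a b l => simp [gdStep_comm]
  | trans _ _ ih1 ih2 => exact (ih1 w0).trans (ih2 w0)
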